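/- arXiv:2404.15900 — 3 statements merged into one kernel-verified Lean document; each statement's English description precedes it below -/
import Mathlib

section
/- Let p ≥ 1 and N ≥ 3. For a Young diagram with row lengths p_1 ≥ ... ≥ p_N ≥ 0, define s_i = p_i - (1/N)∑_j p_j and C_2(p_1,...,p_N) = ∑_{j=1}^N s_j(s_j - 2j). Then for any J+1 ≤ N and any nonincreasing sequence p_1 ≥ ... ≥ p_{J+1} ≥ 0 with ∑_{i=1}^{J+1} p_i = (J+1)p, one has C_2(p_1,...,p_{J+1},0,...,0) - C_2(p,...,p,0,...,0) = C_2(p_1+1,...,p_{J+1}+1,0,...,0) - C_2(p+1,...,p+1,0,...,0), where in the second expression the first J+1 entries are incremented by 1 (spectrum stabilization). -/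
open Finset

/-- Perelomov–Popov quadratic Casimir eigenvalue for an SU(N) Young diagram
with row lengths `q 0 ≥ q 1 ≥ … ≥ q (N-1)`. -/
noncomputable def casimirC2 (N : ℕ) (q : Fin N → ℚ) : ℚ :=
  ∑ j, (q j - (∑ k, q k) / N) * ((q j - (∑ k, q k) / N) - 2 * ((j : ℚ) + 1))

lemma C2_expand (N : ℕ) (f : Fin N → ℚ) :
    casimirC2 N f = (∑ j, (f j ^ 2 - 2 * ((j : ℚ) + 1) * f j))
      - 2 * ((∑ k, f k) / N) * (∑ k, f k) + (N : ℚ) * ((∑ k, f k) / N) ^ 2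
      + 2 * ((∑ k, f k) / N) * (∑ j : Fin N, ((j : ℚ) + 1)) := by
  unfold casimirC2
  have h1 : ∀ j : Fin N, (f j - (∑ k, f k) / N) * ((f j - (∑ k, f k) / N) - 2 * ((j : ℚ) + 1))
      = (f j ^ 2 - 2 * ((j : ℚ) + 1) * f j) - 2 * ((∑ k, f k) / N) * f j
        + ((∑ k, f k) / N) ^ 2 + 2 * ((∑ k, f k) / N) * ((j : ℚ) + 1) := by
    intro j; ring
  simp_rw [h1]
  rw [Finset.sum_add_distrib, Finset.sum_add_distrib, Finset.sum_sub_distrib,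
    ← Finset.mul_sum, ← Finset.mul_sum, Finset.sum_const, Finset.card_univ,
    Fintype.card_fin, nsmul_eq_mul]

theorem stmt_0 (p N J : ℕ) (hp : 1 ≤ p) (hN : 3 ≤ N) (hJ : J + 1 ≤ N)
    (q : Fin N → ℕ)
    (hmono : ∀ i j : Fin N, i ≤ j → q j ≤ q i)
    (hzero : ∀ i : Fin N, J + 1 ≤ (i : ℕ) → q i = 0)
    (hsum : ∑ i, q i = (J + 1) * p) :
    casimirC2 N (fun i => (q i : ℚ))
        - casimirC2 N (fun i => if (i : ℕ) < J + 1 then (p : ℚ) else 0)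
      = casimirC2 N (fun i => if (i : ℕ) < J + 1 then (q i : ℚ) + 1 else 0)
        - casimirC2 N (fun i => if (i : ℕ) < J + 1 then (p : ℚ) + 1 else 0) := by
  have hite : ∀ x : ℚ, (∑ k : Fin N, (if (k : ℕ) < J + 1 then x else 0)) = ((J : ℚ) + 1) * x := by
    intro x
    rw [Fin.sum_univ_eq_sum_range (fun i => if i < J + 1 then x else 0)]
    rw [← Finset.sum_subset (Finset.range_subset_range.2 hJ)
      (by intro i _ hi; simp only [Finset.mem_range] at hi; rw [if_neg (by omega)])]
    rw [Finset.sum_congr rfl (fun i hi => by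
      rw [if_pos (Finset.mem_range.1 hi)])]
    rw [Finset.sum_const, Finset.card_range, nsmul_eq_mul]
    push_cast; ring
  have hA : (∑ k : Fin N, (q k : ℚ)) = ((J : ℚ) + 1) * p := by
    rw [← Nat.cast_sum, hsum]; push_cast; ring
  have hB : (∑ k : Fin N, (if (k : ℕ) < J + 1 then (p : ℚ) else 0)) = ((J : ℚ) + 1) * p :=
    hite p
  have hCfun : ∀ k : Fin N, (if (k : ℕ) < J + 1 then (q k : ℚ) + 1 else 0)
      = (q k : ℚ) + (if (k : ℕ) < J + 1 then (1 : ℚ) else 0) := by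
    intro k
    by_cases h : (k : ℕ) < J + 1
    · simp [h]
    · simp [h, hzero k (le_of_not_gt h)]
  have hC : (∑ k : Fin N, (if (k : ℕ) < J + 1 then (q k : ℚ) + 1 else 0))
      = ((J : ℚ) + 1) * p + ((J : ℚ) + 1) := by
    simp_rw [hCfun]
    rw [Finset.sum_add_distrib, hA, hite 1]; ring
  have hD : (∑ k : Fin N, (if (k : ℕ) < J + 1 then (p : ℚ) + 1 else 0))
      = ((J : ℚ) + 1) * p + ((J : ℚ) + 1) := by
    rw [hite ((p : ℚ) + 1)]; ring
  have hkey : (∑ j : Fin N, ((q j : ℚ) ^ 2 - 2 * ((j : ℚ) + 1) * (q j : ℚ)))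
      - (∑ j : Fin N, ((if (j : ℕ) < J + 1 then (p : ℚ) else 0) ^ 2
          - 2 * ((j : ℚ) + 1) * (if (j : ℕ) < J + 1 then (p : ℚ) else 0)))
      - (∑ j : Fin N, ((if (j : ℕ) < J + 1 then (q j : ℚ) + 1 else 0) ^ 2
          - 2 * ((j : ℚ) + 1) * (if (j : ℕ) < J + 1 then (q j : ℚ) + 1 else 0)))
      + (∑ j : Fin N, ((if (j : ℕ) < J + 1 then (p : ℚ) + 1 else 0) ^ 2
          - 2 * ((j : ℚ) + 1) * (if (j : ℕ) < J + 1 then (p : ℚ) + 1 else 0))) = 0 := by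
    rw [← Finset.sum_sub_distrib, ← Finset.sum_sub_distrib, ← Finset.sum_add_distrib]
    have : ∀ j : Fin N,
        ((q j : ℚ) ^ 2 - 2 * ((j : ℚ) + 1) * (q j : ℚ))
        - ((if (j : ℕ) < J + 1 then (p : ℚ) else 0) ^ 2
            - 2 * ((j : ℚ) + 1) * (if (j : ℕ) < J + 1 then (p : ℚ) else 0))
        - ((if (j : ℕ) < J + 1 then (q j : ℚ) + 1 else 0) ^ 2
            - 2 * ((j : ℚ) + 1) * (if (j : ℕ) < J + 1 then (q j : ℚ) + 1 else 0))
        + ((if (j : ℕ) < J + 1 then (p : ℚ) + 1 else 0) ^ 2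
            - 2 * ((j : ℚ) + 1) * (if (j : ℕ) < J + 1 then (p : ℚ) + 1 else 0))
        = 2 * ((if (j : ℕ) < J + 1 then (p : ℚ) else 0) - (q j : ℚ)) := by
      intro j
      by_cases h : (j : ℕ) < J + 1
      · simp only [if_pos h]; ring
      · simp only [if_neg h, hzero j (le_of_not_gt h)]; push_cast; ring
    rw [Finset.sum_congr rfl (fun j _ => this j)]
    rw [← Finset.mul_sum, Finset.sum_sub_distrib, hB, hA]
    ring
  rw [C2_expand, C2_expand, C2_expand, C2_expand]
  simp only [hA, hB, hC, hD]
  linear_combination hkey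
end

section
/- Let a ≥ 1 and p ≥ 0 be integers, and let p_1 ≥ p_2 ≥ ... ≥ p_a ≥ 0 be integers with ∑_{i=1}^a p_i = a·p. Define δp_i = p_i - p. Then ∑_{i=1}^a ((δp_i - i)² - i²) ≥ 0, with equality if and only if p_i = p for all i. -/
open Finset

theorem stmt_1 (a : ℕ) (ha : 1 ≤ a) (p : ℤ) (hp : 0 ≤ p)
    (q : Fin a → ℤ)
    (hmono : ∀ i j : Fin a, i ≤ j → q j ≤ q i)
    (hnonneg : ∀ i, 0 ≤ q i)
    (hsum : ∑ i, q i = a * p) :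
    0 ≤ ∑ i, ((q i - p - ((i : ℤ) + 1)) ^ 2 - ((i : ℤ) + 1) ^ 2) ∧
      ((∑ i, ((q i - p - ((i : ℤ) + 1)) ^ 2 - ((i : ℤ) + 1) ^ 2)) = 0 ↔
        ∀ i, q i = p) := by
  set d : Fin a → ℤ := fun i => q i - p with hd
  set f : Fin a → ℤ := fun i => (i : ℤ) + 1 with hf
  have hdsum : ∑ i, d i = 0 := by
    simp [hd, Finset.sum_sub_distrib, hsum]
  have hanti : Antivary f d := by
    intro i j hij
    have hqij : q i < q j := by simpa [hd] using hij
    have hji : j ≤ i := by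
      by_contra h
      exact absurd (hmono i j (le_of_not_ge h)) (not_le.mpr hqij)
    have : (j : ℤ) ≤ (i : ℤ) := by exact_mod_cast hji
    simp only [hf]; omega
  have hcheb : (Fintype.card (Fin a) : ℤ) * ∑ i, f i * d i ≤ (∑ i, f i) * ∑ i, d i :=
    hanti.card_mul_sum_le_sum_mul_sum
  rw [hdsum, mul_zero] at hcheb
  have hapos : (0 : ℤ) < (Fintype.card (Fin a) : ℤ) := by
    simp [Fintype.card_fin]; omega
  have hfd : ∑ i, f i * d i ≤ 0 := nonpos_of_mul_nonpos_right hcheb hapos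
  have key : ∑ i, ((q i - p - ((i : ℤ) + 1)) ^ 2 - ((i : ℤ) + 1) ^ 2)
      = ∑ i, d i ^ 2 - 2 * ∑ i, f i * d i := by
    rw [Finset.mul_sum, ← Finset.sum_sub_distrib]
    apply Finset.sum_congr rfl
    intro i _
    simp only [hd, hf]
    ring
  have hsq : 0 ≤ ∑ i, d i ^ 2 := Finset.sum_nonneg fun i _ => sq_nonneg _
  constructor
  · rw [key]; linarith
  · constructor
    · intro h0
      rw [key] at h0
      have hdz : ∑ i, d i ^ 2 = 0 := by linarith
      intro i
      have : d i ^ 2 = 0 := by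
        have := (Finset.sum_eq_zero_iff_of_nonneg (fun i _ => sq_nonneg (d i))).mp hdz i (Finset.mem_univ i)
        exact this
      have : d i = 0 := by nlinarith [sq_nonneg (d i)]
      simp only [hd] at this; omega
    · intro h
      rw [key]
      have h1 : ∀ i ∈ Finset.univ, d i ^ 2 = 0 := by intro i _; simp [hd, h i]
      have h2 : ∀ i ∈ Finset.univ, f i * d i = 0 := by intro i _; simp [hd, h i]
      rw [Finset.sum_congr rfl h1, Finset.sum_congr rfl h2]
      simp
end

section
/- Let g_1(t), g_2(t) be smooth curves of unitary matrices of sizes n and m, and suppose ω_1 = -ġ_1 g_1^{-1}, ω_2 = -ġ_2 g_2^{-1}. Let A, B be constant skew-Hermitian matrices, ξ ∈ ℝ, ω̂_0 an n×m matrix, and define G(t) = diag(g_1, g_2)·diag(exp(ξAt), exp(ξBt))·exp(-t·M), where M is the (n+m)×(n+m) block matrix with diagonal blocks ξA, ξB and off-diagonal blocks ω̂_0 and -ω̂_0^†. Then the block matrix 𝛚(t) with diagonal blocks -ġ_1g_1^{-1}, -ġ_2g_2^{-1} and off-diagonal blocks g_1·exp(ξAt)ω̂_0exp(-ξBt)·g_2^{-1}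 and its negative conjugate transpose satisfies 𝛚(t) = -Ġ(t)·G(t)^{-1}. -/
open Matrix NormedSpace

section aux
attribute [local instance] Matrix.linftyOpNormedAddCommGroup Matrix.linftyOpNormedSpace
  Matrix.linftyOpNormedRing Matrix.linftyOpNormedAlgebra

set_option linter.unusedSectionVars false

variable {k : Type*} [Fintype k] [DecidableEq k]

theorem my_hasDerivAt_entry {f : ℝ → Matrix k k ℂ} {f' : Matrix k k ℂ} {t : ℝ}
    (h : HasDerivAt f f' t) (i j : k) :
    HasDerivAt (fun s => f s i j) (f' i j) t := by
  let L : Matrix k k ℂ →ₗ[ℝ] ℂ :=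
    { toFun := fun M => M i j, map_add' := fun _ _ => rfl, map_smul' := fun _ _ => rfl }
  have hc : Continuous L := L.continuous_of_finiteDimensional
  exact (ContinuousLinearMap.hasFDerivAt ⟨L, hc⟩).comp_hasDerivAt t h

theorem my_hasDerivAt_matrix {f : ℝ → Matrix k k ℂ} {f' : Matrix k k ℂ} {t : ℝ}
    (h : ∀ i j, HasDerivAt (fun s => f s i j) (f' i j) t) :
    HasDerivAt f f' t := by
  have key : HasDerivAt (fun s => ∑ i : k, ∑ j : k, f s i j • single i j (1 : ℂ))
      (∑ i : k, ∑ j : k, f' i j • single i j (1 : ℂ)) t :=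
    HasDerivAt.fun_sum fun i _ => HasDerivAt.fun_sum fun j _ => (h i j).smul_const _
  have e1 : (fun s => ∑ i : k, ∑ j : k, f s i j • single i j (1 : ℂ)) = f := by
    funext s
    simp only [smul_single, smul_eq_mul, mul_one]
    exact (matrix_eq_sum_single _).symm
  have e2 : (∑ i : k, ∑ j : k, f' i j • single i j (1 : ℂ)) = f' := by
    simp only [smul_single, smul_eq_mul, mul_one]
    exact (matrix_eq_sum_single _).symm
  rwa [e1, e2] at key

theorem my_exp_deriv (C : Matrix k k ℂ) (c t : ℝ) :
    HasDerivAt (fun s : ℝ => exp (((c * s : ℝ) : ℂ) • C))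
      (((c : ℂ) • C) * exp (((c * t : ℝ) : ℂ) • C)) t := by
  haveI : CompleteSpace (Matrix k k ℂ) := FiniteDimensional.complete ℂ _
  have base : HasDerivAt (fun u : ℂ => exp (u • ((c : ℂ) • C)))
      (((c : ℂ) • C) * exp ((t : ℂ) • ((c : ℂ) • C))) (t : ℂ) :=
    hasDerivAt_exp_smul_const' _ _
  have comp := (base.hasFDerivAt.restrictScalars ℝ).comp_hasDerivAt t
    Complex.ofRealCLM.hasDerivAt
  have h2 : HasDerivAt (fun s : ℝ => exp ((s : ℂ) • ((c : ℂ) • C)))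
      (((c : ℂ) • C) * exp ((t : ℂ) • ((c : ℂ) • C))) t := by
    convert comp using 1
    · rfl
    · rfl
    · rfl
    · rfl
    · exact (one_smul ℂ (((c : ℂ) • C) * exp ((t : ℂ) • ((c : ℂ) • C)))).symm
  have efun : ∀ s : ℝ, ((s : ℂ)) • ((c : ℂ) • C) = ((c * s : ℝ) : ℂ) • C := by
    intro s; rw [smul_smul]; push_cast; rw [mul_comm]
  simp only [efun] at h2
  exact h2

theorem my_exp_neg_deriv (C : Matrix k k ℂ) (t : ℝ) :
    HasDerivAt (fun s : ℝ => exp (((-s : ℝ) : ℂ) • C))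
      ((-C) * exp (((-t : ℝ) : ℂ) • C)) t := by
  have h := my_exp_deriv C (-1) t
  simp only [neg_one_mul] at h
  have e : (((-1 : ℝ) : ℂ)) • C = -C := by push_cast; rw [neg_smul, one_smul]
  rwa [e] at h

theorem my_key (n m : ℕ) (ξ : ℝ)
    (g₁ g₁' : ℝ → Matrix (Fin n) (Fin n) ℂ)
    (g₂ g₂' : ℝ → Matrix (Fin m) (Fin m) ℂ)
    (hg₁unit : ∀ t : ℝ, g₁ t ∈ Matrix.unitaryGroup (Fin n) ℂ)
    (hg₂unit : ∀ t : ℝ, g₂ t ∈ Matrix.unitaryGroup (Fin m) ℂ)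
    (hg₁ : ∀ (t : ℝ) (i j : Fin n), HasDerivAt (fun s => g₁ s i j) (g₁' t i j) t)
    (hg₂ : ∀ (t : ℝ) (i j : Fin m), HasDerivAt (fun s => g₂ s i j) (g₂' t i j) t)
    (A : Matrix (Fin n) (Fin n) ℂ) (B : Matrix (Fin m) (Fin m) ℂ)
    (hA : Aᴴ = -A) (hB : Bᴴ = -B)
    (ω₀ : Matrix (Fin n) (Fin m) ℂ) (t : ℝ) :
    HasDerivAt
        (fun s : ℝ =>
          Matrix.fromBlocks (g₁ s) 0 0 (g₂ s) *
            Matrix.fromBlocks (NormedSpace.exp (((ξ * s : ℝ) : ℂ) • A)) 0 0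
              (NormedSpace.exp (((ξ * s : ℝ) : ℂ) • B)) *
            NormedSpace.exp (((-s : ℝ) : ℂ) •
              Matrix.fromBlocks (ξ • A) ω₀ (-ω₀ᴴ) (ξ • B)))
        (-(Matrix.fromBlocks (-(g₁' t * (g₁ t)⁻¹))
              (g₁ t *
                (NormedSpace.exp (((ξ * t : ℝ) : ℂ) • A) * ω₀ *
                  NormedSpace.exp (((-(ξ * t) : ℝ) : ℂ) • B)) * (g₂ t)⁻¹)
              (-(g₁ t *
                  (NormedSpace.exp (((ξ * t : ℝ) : ℂ) • A) * ω₀ *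
                    NormedSpace.exp (((-(ξ * t) : ℝ) : ℂ) • B)) * (g₂ t)⁻¹)ᴴ)
              (-(g₂' t * (g₂ t)⁻¹))) *
          (Matrix.fromBlocks (g₁ t) 0 0 (g₂ t) *
            Matrix.fromBlocks (NormedSpace.exp (((ξ * t : ℝ) : ℂ) • A)) 0 0
              (NormedSpace.exp (((ξ * t : ℝ) : ℂ) • B)) *
            NormedSpace.exp (((-t : ℝ) : ℂ) •
              Matrix.fromBlocks (ξ • A) ω₀ (-ω₀ᴴ) (ξ • B)))) t := by
  haveI : CompleteSpace (Matrix (Fin n) (Fin n) ℂ) := FiniteDimensional.complete ℂ _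
  haveI : CompleteSpace (Matrix (Fin m) (Fin m) ℂ) := FiniteDimensional.complete ℂ _
  -- derivatives
  have hP : HasDerivAt (fun s => Matrix.fromBlocks (g₁ s) 0 0 (g₂ s))
      (Matrix.fromBlocks (g₁' t) 0 0 (g₂' t)) t := by
    apply my_hasDerivAt_matrix
    rintro (i | i) (j | j)
    · simpa using hg₁ t i j
    · simpa using hasDerivAt_const t (0 : ℂ)
    · simpa using hasDerivAt_const t (0 : ℂ)
    · simpa using hg₂ t i j
  have hEa := my_exp_deriv A ξ t
  have hEb := my_exp_deriv B ξ t
  have hE : HasDerivAt (fun s => Matrix.fromBlocks (NormedSpace.exp (((ξ * s : ℝ) : ℂ) • A)) 0 0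
        (NormedSpace.exp (((ξ * s : ℝ) : ℂ) • B)))
      (Matrix.fromBlocks (((ξ : ℂ) • A) * NormedSpace.exp (((ξ * t : ℝ) : ℂ) • A)) 0 0 (((ξ : ℂ) • B) * NormedSpace.exp (((ξ * t : ℝ) : ℂ) • B))) t := by
    apply my_hasDerivAt_matrix
    rintro (i | i) (j | j)
    · simpa using my_hasDerivAt_entry hEa i j
    · simpa using hasDerivAt_const t (0 : ℂ)
    · simpa using hasDerivAt_const t (0 : ℂ)
    · simpa using my_hasDerivAt_entry hEb i j
  have hX := my_exp_neg_deriv (Matrix.fromBlocks (ξ • A) ω₀ (-ω₀ᴴ) (ξ • B)) t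
  -- notation
  set a := NormedSpace.exp (((ξ * t : ℝ) : ℂ) • A) with ha_def
  set b := NormedSpace.exp (((ξ * t : ℝ) : ℂ) • B) with hb_def
  set b' := NormedSpace.exp (((-(ξ * t) : ℝ) : ℂ) • B) with hb'_def
  set M := Matrix.fromBlocks (ξ • A) ω₀ (-ω₀ᴴ) (ξ • B) with hM_def
  -- basic facts
  have h1 : (g₁ t)ᴴ * g₁ t = 1 := by
    have := (mem_unitaryGroup_iff'.mp (hg₁unit t))
    rwa [Matrix.star_eq_conjTranspose] at this
  have h2 : (g₂ t)ᴴ * g₂ t = 1 := by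
    have := (mem_unitaryGroup_iff'.mp (hg₂unit t))
    rwa [Matrix.star_eq_conjTranspose] at this
  have hinv1 : (g₁ t)⁻¹ = (g₁ t)ᴴ := Matrix.inv_eq_left_inv h1
  have hinv2 : (g₂ t)⁻¹ = (g₂ t)ᴴ := Matrix.inv_eq_left_inv h2
  have hb'b : b' * b = 1 := by
    have e : ((-(ξ * t) : ℝ) : ℂ) • B = -(((ξ * t : ℝ) : ℂ) • B) := by
      push_cast; rw [neg_smul]
    rw [hb'_def, hb_def, e, ← Matrix.exp_add_of_commute (-(((ξ * t : ℝ) : ℂ) • B)) _ ((Commute.refl _).neg_left),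
      neg_add_cancel, exp_zero]
  have haa : aᴴ * a = 1 := by
    have e1 : aᴴ = NormedSpace.exp (-(((ξ * t : ℝ) : ℂ) • A)) := by
      rw [ha_def, ← Matrix.star_eq_conjTranspose, star_exp]
      congr 1
      rw [Matrix.star_eq_conjTranspose, conjTranspose_smul, hA, Complex.star_def,
        Complex.conj_ofReal, smul_neg]
    rw [e1, ha_def, ← Matrix.exp_add_of_commute (-(((ξ * t : ℝ) : ℂ) • A)) _ ((Commute.refl _).neg_left),
      neg_add_cancel, exp_zero]
  have hb'H : b'ᴴ = b := by
    rw [hb'_def, hb_def, ← Matrix.star_eq_conjTranspose, star_exp]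
    congr 1
    rw [Matrix.star_eq_conjTranspose, conjTranspose_smul, hB, Complex.star_def,
      Complex.conj_ofReal, smul_neg, Complex.ofReal_neg, neg_smul, neg_neg]
  have hcommA : ((ξ : ℂ) • A) * a = a * ((ξ : ℂ) • A) :=
    ((((Commute.refl A).smul_left _).smul_right _).exp_right).eq
  have hcommB : ((ξ : ℂ) • B) * b = b * ((ξ : ℂ) • B) :=
    ((((Commute.refl B).smul_left _).smul_right _).exp_right).eq
  have hRA : ξ • A = (ξ : ℂ) • A := by ext i j; simp [Complex.real_smul]
  have hRB : ξ • B = (ξ : ℂ) • B := by ext i j; simp [Complex.real_smul]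
  have hG := (hP.mul hE).mul hX
  refine hG.congr_deriv ?_
  -- now the matrix identity
  set P := Matrix.fromBlocks (g₁ t) 0 0 (g₂ t) with hP_def
  set E := Matrix.fromBlocks a 0 0 b with hE_def
  set X := NormedSpace.exp (((-t : ℝ) : ℂ) • M) with hX_def
  set Ω := Matrix.fromBlocks (-(g₁' t * (g₁ t)⁻¹)) (g₁ t * (a * ω₀ * b') * (g₂ t)⁻¹)
      (-(g₁ t * (a * ω₀ * b') * (g₂ t)⁻¹)ᴴ) (-(g₂' t * (g₂ t)⁻¹)) with hΩ_def
  have hcore : Matrix.fromBlocks (g₁' t) 0 0 (g₂' t) * E +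
      P * Matrix.fromBlocks (((ξ : ℂ) • A) * a) 0 0 (((ξ : ℂ) • B) * b) + P * E * (-M)
      = -Ω * (P * E) := by
    have c1 : ∀ Y : Matrix (Fin n) (Fin n) ℂ, (g₁ t)ᴴ * (g₁ t * Y) = Y := fun Y => by
      rw [← mul_assoc, h1, one_mul]
    have c2 : ∀ Y : Matrix (Fin m) (Fin m) ℂ, (g₂ t)ᴴ * (g₂ t * Y) = Y := fun Y => by
      rw [← mul_assoc, h2, one_mul]
    rw [hΩ_def, hP_def, hE_def, hM_def, hinv1, hinv2, hRA, hRB]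
    rw [Matrix.fromBlocks_neg, Matrix.fromBlocks_neg]
    simp only [Matrix.fromBlocks_multiply, Matrix.fromBlocks_add, neg_neg,
      Matrix.mul_zero, Matrix.zero_mul, add_zero, zero_add, mul_zero, zero_mul]
    apply Matrix.fromBlocks_inj.mpr
    refine ⟨?_, ?_, ?_, ?_⟩
    · rw [mul_neg, mul_assoc (g₁ t) a, ← hcommA, add_assoc, add_neg_cancel, add_zero,
        mul_assoc (g₁' t), c1]
    · rw [Matrix.mul_neg, Matrix.neg_mul, Matrix.mul_assoc (g₁ t * (a * ω₀ * b')), c2,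
        Matrix.mul_assoc (g₁ t) (a * ω₀ * b') b, Matrix.mul_assoc (a * ω₀) b' b, hb'b,
        Matrix.mul_one, Matrix.mul_assoc (g₁ t) a ω₀]
    · simp only [conjTranspose_mul, conjTranspose_conjTranspose, hb'H, Matrix.mul_assoc, c1,
        haa, Matrix.mul_one, Matrix.one_mul]
    · rw [mul_neg, mul_assoc (g₂ t) b, ← hcommB, add_assoc, add_neg_cancel, add_zero,
        mul_assoc (g₂' t), c2]
  simp only [Pi.mul_apply]
  rw [← mul_assoc (P * E) (-M) X, ← add_mul, hcore, mul_assoc]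
end aux


theorem stmt_14 (n m : ℕ) (ξ : ℝ)
    (g₁ g₁' : ℝ → Matrix (Fin n) (Fin n) ℂ)
    (g₂ g₂' : ℝ → Matrix (Fin m) (Fin m) ℂ)
    (hg₁unit : ∀ t : ℝ, g₁ t ∈ Matrix.unitaryGroup (Fin n) ℂ)
    (hg₂unit : ∀ t : ℝ, g₂ t ∈ Matrix.unitaryGroup (Fin m) ℂ)
    (hg₁ : ∀ (t : ℝ) (i j : Fin n), HasDerivAt (fun s => g₁ s i j) (g₁' t i j) t)
    (hg₂ : ∀ (t : ℝ) (i j : Fin m), HasDerivAt (fun s => g₂ s i j) (g₂' t i j) t)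
    (A : Matrix (Fin n) (Fin n) ℂ) (B : Matrix (Fin m) (Fin m) ℂ)
    (hA : Aᴴ = -A) (hB : Bᴴ = -B)
    (ω₀ : Matrix (Fin n) (Fin m) ℂ) :
    -- G(t) = diag(g₁, g₂) · diag(exp(ξAt), exp(ξBt)) · exp(-tM),
    -- M = fromBlocks (ξA) ω₀ (-ω₀ᴴ) (ξB);
    -- the claim: Ġ = -𝛚·G, i.e. 𝛚 = -Ġ·G⁻¹, where 𝛚 has diagonal blocks
    -- -ġ₁g₁⁻¹, -ġ₂g₂⁻¹ and off-diagonal block g₁·exp(ξAt)·ω₀·exp(-ξBt)·g₂⁻¹.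
    ∀ (t : ℝ) (i j : Fin n ⊕ Fin m),
      HasDerivAt
        (fun s : ℝ =>
          (Matrix.fromBlocks (g₁ s) 0 0 (g₂ s) *
            Matrix.fromBlocks (NormedSpace.exp (((ξ * s : ℝ) : ℂ) • A)) 0 0
              (NormedSpace.exp (((ξ * s : ℝ) : ℂ) • B)) *
            NormedSpace.exp (((-s : ℝ) : ℂ) •
              Matrix.fromBlocks (ξ • A) ω₀ (-ω₀ᴴ) (ξ • B))) i j)
        ((-(Matrix.fromBlocks (-(g₁' t * (g₁ t)⁻¹))
              (g₁ t *
                (NormedSpace.exp (((ξ * t : ℝ) : ℂ) • A) * ω₀ *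
                  NormedSpace.exp (((-(ξ * t) : ℝ) : ℂ) • B)) * (g₂ t)⁻¹)
              (-(g₁ t *
                  (NormedSpace.exp (((ξ * t : ℝ) : ℂ) • A) * ω₀ *
                    NormedSpace.exp (((-(ξ * t) : ℝ) : ℂ) • B)) * (g₂ t)⁻¹)ᴴ)
              (-(g₂' t * (g₂ t)⁻¹))) *
          (Matrix.fromBlocks (g₁ t) 0 0 (g₂ t) *
            Matrix.fromBlocks (NormedSpace.exp (((ξ * t : ℝ) : ℂ) • A)) 0 0
              (NormedSpace.exp (((ξ * t : ℝ) : ℂ) • B)) *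
            NormedSpace.exp (((-t : ℝ) : ℂ) •
              Matrix.fromBlocks (ξ • A) ω₀ (-ω₀ᴴ) (ξ • B)))) i j) t := by
  intro t i j
  exact my_hasDerivAt_entry
    (my_key n m ξ g₁ g₁' g₂ g₂' hg₁unit hg₂unit hg₁ hg₂ A B hA hB ω₀ t) i j
end
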